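/- arXiv:1802.05309 — 4 statements merged into one kernel-verified Lean document; each statement's English description precedes it below -/
import Mathlib

section
/- Let p be a prime and ℓ ∈ ℕ with ℓ < p-1. Let m be a non-negative integer whose base-p digit sum is strictly greater than ℓ and with m ≡ ℓ (mod p-1). Then there exists a positive integer j < m with j ≡ ℓ (mod p-1), such that every base-p digit of j is at most the corresponding base-p digit of m, and some digit of j is strictly smaller. -/
namespace Stmt10Aux

def trunc : ℕ → List ℕ → List ℕ
  | _, [] => []
  | b, a :: t => min b a :: trunc (b - min b a) t

lemma trunc_sum (b : ℕ) (l : List ℕ) : (trunc b l).sum = min b l.sum := by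
  induction l generalizing b with
  | nil => simp [trunc]
  | cons a t ih =>
    simp only [trunc, List.sum_cons, ih]
    omega

lemma trunc_getD_le (b : ℕ) (l : List ℕ) (i : ℕ) :
    (trunc b l).getD i 0 ≤ l.getD i 0 := by
  induction l generalizing b i with
  | nil => simp [trunc]
  | cons a t ih =>
    cases i with
    | zero => simp [trunc]
    | succ i => simpa [trunc] using ih (b - min b a) i

lemma trunc_exists_lt (b : ℕ) (l : List ℕ) (h : b < l.sum) :
    ∃ i, (trunc b l).getD i 0 < l.getD i 0 := by
  induction l generalizing b with
  | nil => simp at h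
  | cons a t ih =>
    by_cases hb : b < a
    · exact ⟨0, by simp [trunc]; omega⟩
    · have : b - min b a < t.sum := by simp [List.sum_cons] at h; omega
      obtain ⟨i, hi⟩ := ih (b - min b a) this
      exact ⟨i + 1, by simpa [trunc] using hi⟩

lemma trunc_mem_lt {p : ℕ} (b : ℕ) (l : List ℕ) (hl : ∀ x ∈ l, x < p) :
    ∀ x ∈ trunc b l, x < p := by
  induction l generalizing b with
  | nil => simp [trunc]
  | cons a t ih =>
    intro x hx
    simp only [trunc, List.mem_cons] at hx
    rcases hx with rfl | hx
    · have := hl a (by simp); omega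
    · exact ih (b - min b a) (fun y hy => hl y (by simp [hy])) x hx

lemma ofDigits_trunc_le (p b : ℕ) (l : List ℕ) :
    Nat.ofDigits p (trunc b l) ≤ Nat.ofDigits p l := by
  induction l generalizing b with
  | nil => simp [trunc]
  | cons a t ih =>
    simp only [trunc, Nat.ofDigits_cons]
    have := ih (b - min b a)
    have : min b a ≤ a := min_le_right _ _
    have h2 := ih (b - min b a)
    have h3 : p * Nat.ofDigits p (trunc (b - min b a) t) ≤ p * Nat.ofDigits p t :=
      Nat.mul_le_mul_left _ h2
    omega

lemma ofDigits_trunc_lt (p b : ℕ) (hp : 0 < p) (l : List ℕ) (h : b < l.sum) :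
    Nat.ofDigits p (trunc b l) < Nat.ofDigits p l := by
  induction l generalizing b with
  | nil => simp at h
  | cons a t ih =>
    simp only [trunc, Nat.ofDigits_cons]
    by_cases hb : b < a
    · have : min b a = b := by omega
      have h3 : p * Nat.ofDigits p (trunc (b - min b a) t) ≤ p * Nat.ofDigits p t :=
        Nat.mul_le_mul_left _ (ofDigits_trunc_le p _ t)
      omega
    · have hmin : min b a = a := by omega
      have : b - min b a < t.sum := by simp [List.sum_cons] at h; omega
      have h2 := ih (b - min b a) this
      have h3 : p * Nat.ofDigits p (trunc (b - min b a) t) < p * Nat.ofDigits p t :=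
        Nat.mul_lt_mul_of_pos_left h2 hp
      omega

lemma sum_le_ofDigits (p : ℕ) (hp : 1 ≤ p) (l : List ℕ) : l.sum ≤ Nat.ofDigits p l := by
  induction l with
  | nil => simp
  | cons a t ih =>
    simp only [Nat.ofDigits_cons, List.sum_cons]
    have : t.sum ≤ p * Nat.ofDigits p t := le_trans ih (Nat.le_mul_of_pos_left _ (by omega))
    omega

lemma getD_digits (p : ℕ) (hp : 2 ≤ p) (i n : ℕ) :
    (Nat.digits p n).getD i 0 = n / p ^ i % p := by
  induction i generalizing n with
  | zero =>
    rcases Nat.eq_zero_or_pos n with rfl | hn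
    · simp
    · rw [Nat.digits_def' (by omega : 1 < p) hn]
      simp
  | succ i ih =>
    rcases Nat.eq_zero_or_pos n with rfl | hn
    · simp
    · rw [Nat.digits_def' (by omega : 1 < p) hn]
      simp only [List.getD_cons_succ]
      rw [ih (n / p), Nat.div_div_eq_div_mul, ← pow_succ']

lemma ofDigits_div_pow_mod (p : ℕ) (hp : 2 ≤ p) (l : List ℕ) (hl : ∀ x ∈ l, x < p)
    (i : ℕ) : Nat.ofDigits p l / p ^ i % p = l.getD i 0 := by
  induction l generalizing i with
  | nil => simp
  | cons a t ih =>
    have ha : a < p := hl a (by simp)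
    cases i with
    | zero =>
      simp only [Nat.ofDigits_cons, pow_zero, Nat.div_one, List.getD_cons_zero]
      rw [Nat.add_mul_mod_self_left, Nat.mod_eq_of_lt ha]
    | succ i =>
      simp only [Nat.ofDigits_cons, List.getD_cons_succ]
      have hdiv : (↑a + p * Nat.ofDigits p t) / p = Nat.ofDigits p t := by
        rw [Nat.add_mul_div_left _ _ (by omega : 0 < p), Nat.div_eq_of_lt ha, Nat.zero_add]
      rw [pow_succ', ← Nat.div_div_eq_div_mul, hdiv,
        ih (fun y hy => hl y (by simp [hy])) i]

end Stmt10Aux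

open Stmt10Aux in
theorem stmt10 (p : ℕ) (hp : p.Prime) (ℓ : ℕ) (hℓ : 1 ≤ ℓ) (hℓp : ℓ < p - 1)
    (m : ℕ) (hsum : ℓ < (Nat.digits p m).sum) (hmod : m ≡ ℓ [MOD p - 1]) :
    ∃ j : ℕ, 0 < j ∧ j < m ∧ j ≡ ℓ [MOD p - 1] ∧
      (∀ i : ℕ, (Nat.digits p j).getD i 0 ≤ (Nat.digits p m).getD i 0) ∧
      (∃ i : ℕ, (Nat.digits p j).getD i 0 < (Nat.digits p m).getD i 0) := by
  have hp2 : 2 ≤ p := hp.two_le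
  have hp3 : 3 ≤ p := by omega
  set d := Nat.digits p m with hd
  set e := trunc ℓ d with he
  set j := Nat.ofDigits p e with hj
  have hdlt : ∀ x ∈ d, x < p := fun x hx => Nat.digits_lt_base (by omega) hx
  have helt : ∀ x ∈ e, x < p := trunc_mem_lt ℓ d hdlt
  have hesum : e.sum = ℓ := by rw [he, trunc_sum]; omega
  have hmodp : p % (p - 1) = 1 := by
    rw [Nat.mod_eq_sub_mod (by omega)]
    have h1 : p - (p - 1) = 1 := by omega
    rw [h1, Nat.mod_eq_of_lt (by omega)]
  have hjmod : j ≡ ℓ [MOD p - 1] := by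
    have h1 : j ≡ Nat.ofDigits (p % (p - 1)) e [MOD p - 1] := Nat.ofDigits_modEq p (p - 1) e
    rw [hmodp] at h1
    simpa [Nat.ofDigits_one, hesum] using h1
  have hjpos : 0 < j := by
    have := sum_le_ofDigits p (by omega) e
    omega
  have hjlt : j < m := by
    have h1 := ofDigits_trunc_lt p ℓ (by omega) d hsum
    rw [← he] at h1
    have hm : Nat.ofDigits p d = m := Nat.ofDigits_digits p m
    omega
  refine ⟨j, hjpos, hjlt, hjmod, ?_, ?_⟩
  · intro i
    rw [getD_digits p hp2 i j, hj, ofDigits_div_pow_mod p hp2 e helt i]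
    exact trunc_getD_le ℓ d i
  · obtain ⟨i, hi⟩ := trunc_exists_lt ℓ d hsum
    exact ⟨i, by rw [getD_digits p hp2 i j, hj, ofDigits_div_pow_mod p hp2 e helt i]; exact hi⟩
end

section
/- Let p be a prime and 1 ≤ ℓ < p-1. Let m be a positive integer such that in the rational function field 𝔽_p(t), the element (A_{ℓ,1}(t+1)^m + A_{ℓ,2}(t+2)^m + ... + A_{ℓ,p-1}(t+p-1)^m) = 1 and ∑_a A_{k,a}(t+a)^m = 0 for all ℓ < k ≤ p-2, where (A_{k,a}) is the inverse of the Vandermonde matrix (a^j). Then m is a sum of exactly ℓ powers of p, i.e., m = p^{n_1} + ... + p^{n_ℓ} for some n_1,...,n_ℓ ∈ ℕ₀. -/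
/-!
Over `𝔽_p` the nodes `1, …, p - 1` are the `(p - 1)`-th roots of unity, so row `k` of the inverse
Vandermonde matrix extracts the exponents `≡ k (mod p - 1)`: the coefficient of `t ^ j` in
`∑ₐ A_{ℓ,a} (t + a) ^ m` is `C(m, j)` if `m - j ≡ ℓ` and `0` otherwise. Hence `m ≡ ℓ` and
`p ∣ C(m, i)` for every `i < m` with `i ≡ ℓ (mod p - 1)`. If the base-`p` digit sum of `m` exceeded
`ℓ`, lowering digits of `m` would give such an `i` of digit sum `ℓ`, and Lucas' theorem would make
`C(m, i)` prime to `p`. So the digit sum is at most `ℓ` and congruent to it modulo `p - 1`, and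
splitting `p ^ e = p · p ^ (e - 1)` raises the number of powers by `p - 1` until it reaches `ℓ`.
-/

theorem Polynomial.coeff_sum_C_mul_X_add_C_pow {R ι : Type*} [CommSemiring R] (s : Finset ι)
    (c x : ι → R) (m j : ℕ) :
    (∑ a ∈ s, C (c a) * (X + C (x a)) ^ m).coeff j =
      m.choose j * ∑ a ∈ s, c a * x a ^ (m - j) := by
  simp only [finsetSum_coeff, coeff_C_mul, coeff_X_add_C_pow, Finset.mul_sum]
  exact Finset.sum_congr rfl fun a _ => by ring

theorem Matrix.sum_mul_pow_of_mul_vandermonde_eq_one {R : Type*} [CommRing R] {n : ℕ}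
    {x : Fin n → R} {A : Matrix (Fin n) (Fin n) R} (hA : A * vandermonde x = 1)
    (hx : ∀ a, x a ^ n = 1) (k : Fin n) (i : ℕ) :
    ∑ a, A k a * x a ^ i = if (k : ℕ) = i % n then 1 else 0 := by
  have hi : i % n < n := Nat.mod_lt i k.pos
  have hpow : ∀ a, x a ^ i = vandermonde x a ⟨i % n, hi⟩ := fun a => by
    rw [vandermonde_apply]
    conv_lhs => rw [← Nat.div_add_mod i n, pow_add, pow_mul, hx, one_pow, one_mul]
  simp_rw [hpow, ← Matrix.mul_apply, hA, Matrix.one_apply, Fin.ext_iff]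

theorem ZMod.inv_vandermonde_mul_vandermonde (p : ℕ) [Fact p.Prime] :
    (Matrix.vandermonde fun a : Fin (p - 1) => ((a + 1 : ℕ) : ZMod p))⁻¹ *
      Matrix.vandermonde (fun a : Fin (p - 1) => ((a + 1 : ℕ) : ZMod p)) = 1 := by
  refine Matrix.nonsing_inv_mul _ (isUnit_iff_ne_zero.2 (Matrix.det_vandermonde_ne_zero_iff.2 ?_))
  intro a b hab
  rw [ZMod.natCast_eq_natCast_iff', Nat.mod_eq_of_lt (by omega), Nat.mod_eq_of_lt (by omega)]
    at hab
  exact Fin.ext (by omega)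

theorem ZMod.natCast_succ_pow_sub_one {p : ℕ} [Fact p.Prime] (a : Fin (p - 1)) :
    ((a + 1 : ℕ) : ZMod p) ^ (p - 1) = 1 :=
  pow_card_sub_one_eq_one fun h =>
    Nat.not_dvd_of_pos_of_lt (Nat.succ_pos a) (by have := a.isLt; omega)
      ((natCast_eq_zero_iff _ _).1 h)

namespace Nat

theorem not_dvd_choose_of_lt {p n k : ℕ} (hp : p.Prime) (hn : n < p) (hk : k ≤ n) :
    ¬p ∣ n.choose k := by
  intro h
  have : p ∣ n ! := choose_mul_factorial_mul_factorial hk ▸ (h.mul_right _).mul_right _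
  exact (hp.dvd_factorial.1 this).not_gt hn

theorem digits_sum_add_mul {b d : ℕ} (hb : 1 < b) (hd : d < b) (n : ℕ) :
    (digits b (d + b * n)).sum = d + (digits b n).sum := by
  by_cases h : d = 0 ∧ n = 0
  · simp [h.1, h.2]
  · rw [digits_add b hb d n hd (by tauto), List.sum_cons]

theorem digits_sum_eq_mod_add {b : ℕ} (hb : 1 < b) (n : ℕ) :
    (digits b n).sum = n % b + (digits b (n / b)).sum := by
  conv_lhs => rw [← mod_add_div n b]
  exact digits_sum_add_mul hb (mod_lt n (by omega)) _

theorem modEq_digits_sum_sub_one {b : ℕ} (hb : 1 < b) (n : ℕ) :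
    n ≡ (digits b n).sum [MOD b - 1] := by
  obtain ⟨k, rfl⟩ : ∃ k, b = k + 2 := ⟨b - 2, by omega⟩
  rcases k with _ | k
  · exact modEq_one
  · refine modEq_digits_sum _ _ ?_ n
    rw [show k + 1 + 2 - 1 = k + 2 by omega, show k + 1 + 2 = k + 2 + 1 by omega, add_mod_left,
      mod_eq_of_lt (by omega)]

theorem exists_digits_sum_eq_not_dvd_choose {p : ℕ} (hp : p.Prime) (m : ℕ) {t : ℕ}
    (ht : t ≤ (digits p m).sum) : ∃ i, (digits p i).sum = t ∧ ¬p ∣ m.choose i := by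
  have := Fact.mk hp
  induction m using Nat.strong_induction_on generalizing t with
  | _ m ih =>
  rcases eq_or_ne m 0 with rfl | hm
  · exact ⟨0, by simp at ht ⊢; omega, by simpa using hp.one_lt.ne'⟩
  set d := min (m % p) t
  have hd : d < p := (min_le_left _ _).trans_lt (mod_lt m hp.pos)
  rw [digits_sum_eq_mod_add hp.one_lt] at ht
  obtain ⟨i, hi, hndvd⟩ :=
    ih (m / p) (div_lt_self (pos_of_ne_zero hm) hp.one_lt) (t := t - d) (by omega)
  refine ⟨d + p * i, by rw [digits_sum_add_mul hp.one_lt hd, hi]; omega, fun h => ?_⟩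
  have hlucas :=
    Choose.choose_modEq_choose_mod_mul_choose_div_nat (n := m) (k := d + p * i) (p := p)
  rw [add_mul_mod_self_left, mod_eq_of_lt hd, add_mul_div_left _ _ hp.pos, div_eq_of_lt hd,
    zero_add] at hlucas
  rcases hp.dvd_mul.1 ((hlucas.dvd_iff dvd_rfl).1 h) with h | h
  · exact not_dvd_choose_of_lt hp (mod_lt m hp.pos) (min_le_left _ _) h
  · exact hndvd h

theorem digits_sum_le_of_dvd_choose {p m c : ℕ} (hp : p.Prime)
    (h : ∀ i < m, i ≡ c [MOD p - 1] → p ∣ m.choose i) : (digits p m).sum ≤ c := by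
  by_contra! hlt
  obtain ⟨i, rfl, hndvd⟩ := exists_digits_sum_eq_not_dvd_choose hp m hlt.le
  have him : i ≤ m := not_lt.1 fun h' => hndvd (by rw [choose_eq_zero_of_lt h']; exact dvd_zero p)
  have hne : i ≠ m := by rintro rfl; exact hlt.false
  exact hndvd (h i (him.lt_of_ne hne) (modEq_digits_sum_sub_one hp.one_lt i))

end Nat

def IsSumOfPowers (p c m : ℕ) : Prop :=
  ∃ M : Multiset ℕ, Multiset.card M = c ∧ (M.map (p ^ ·)).sum = m

namespace IsSumOfPowers

variable {p c m : ℕ}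

theorem exists_fin (h : IsSumOfPowers p c m) : ∃ n : Fin c → ℕ, m = ∑ i, p ^ n i := by
  obtain ⟨M, rfl, rfl⟩ := h
  rw [← Multiset.length_toList]
  exact ⟨fun i => M.toList[i.1], by simp [Multiset.sum_map_toList]⟩

theorem add_add_mul (r : ℕ) (h : IsSumOfPowers p c m) : IsSumOfPowers p (r + c) (r + p * m) := by
  obtain ⟨M, rfl, rfl⟩ := h
  refine ⟨Multiset.replicate r 0 + M.map (· + 1), by simp, ?_⟩
  simp [Multiset.sum_map_mul_left, pow_succ']

theorem digits_sum (hp : 1 < p) (m : ℕ) : IsSumOfPowers p (Nat.digits p m).sum m := by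
  induction m using Nat.strong_induction_on with
  | _ m ih =>
  rcases eq_or_ne m 0 with rfl | hm
  · exact ⟨0, by simp, by simp⟩
  have := (ih (m / p) (Nat.div_lt_self (Nat.pos_of_ne_zero hm) hp)).add_add_mul (m % p)
  rwa [← Nat.digits_sum_eq_mod_add hp, Nat.mod_add_div] at this

theorem add_sub_one (hp : 0 < p) (h : IsSumOfPowers p c m) (hcm : c < m) :
    IsSumOfPowers p (c + (p - 1)) m := by
  obtain ⟨M, rfl, rfl⟩ := h
  obtain ⟨e, he, he1⟩ : ∃ e ∈ M, e ≠ 0 := by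
    by_contra! h0
    rw [Multiset.map_congr (g := fun _ => 1) rfl fun e he => by rw [h0 e he, pow_zero],
      Multiset.map_const', Multiset.sum_replicate, smul_eq_mul, mul_one] at hcm
    exact hcm.false
  refine ⟨Multiset.replicate p (e - 1) + M.erase e, ?_, ?_⟩
  · rw [Multiset.card_add, Multiset.card_replicate, Multiset.card_erase_of_mem he,
      Nat.pred_eq_sub_one]
    have := Multiset.card_pos_iff_exists_mem.2 ⟨e, he⟩
    omega
  · conv_rhs => rw [← Multiset.cons_erase he]
    obtain ⟨e, rfl⟩ := Nat.exists_eq_succ_of_ne_zero he1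
    simp [pow_succ']

theorem add_mul_sub_one (hp : 1 < p) (h : IsSumOfPowers p c m) (t : ℕ)
    (hcm : c + t * (p - 1) ≤ m) : IsSumOfPowers p (c + t * (p - 1)) m := by
  induction t with
  | zero => simpa using h
  | succ t ih =>
    rw [Nat.succ_mul, ← add_assoc] at hcm ⊢
    exact (ih (by omega)).add_sub_one (by omega) (by omega)

end IsSumOfPowers

theorem Nat.exists_fin_sum_pow_of_digits_sum_le {p c m : ℕ} (hp : 1 < p)
    (hle : (digits p m).sum ≤ c) (hmod : c ≡ m [MOD p - 1]) (hcm : c ≤ m) :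
    ∃ n : Fin c → ℕ, m = ∑ i, p ^ n i := by
  obtain ⟨t, ht⟩ :=
    (Nat.modEq_iff_dvd' hle).1 ((modEq_digits_sum_sub_one hp m).symm.trans hmod.symm)
  have hc : c = (digits p m).sum + t * (p - 1) := by rw [mul_comm, ← ht]; omega
  rw [hc] at hcm ⊢
  exact ((IsSumOfPowers.digits_sum hp m).add_mul_sub_one hp t hcm).exists_fin

open Polynomial in
theorem stmt11_general (p : ℕ) (hp : p.Prime) (ℓ : ℕ) (hℓp : ℓ < p - 1)
    (V : Matrix (Fin (p - 1)) (Fin (p - 1)) (ZMod p))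
    (hV : ∀ a j : Fin (p - 1), V a j = (((a : ℕ) + 1 : ℕ) : ZMod p) ^ (j : ℕ))
    (A : Matrix (Fin (p - 1)) (Fin (p - 1)) (ZMod p)) (hA : A = V⁻¹)
    (m : ℕ)
    (h1 : ∑ a : Fin (p - 1),
        C (A ⟨ℓ, hℓp⟩ a) * (X + C (((a : ℕ) + 1 : ℕ) : ZMod p)) ^ m = 1) :
    ∃ n : Fin ℓ → ℕ, m = ∑ i, p ^ n i := by
  have := Fact.mk hp
  have hV : V = Matrix.vandermonde fun a : Fin (p - 1) => ((a + 1 : ℕ) : ZMod p) := by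
    ext; exact hV _ _
  subst hV hA
  have hcoeff (j : ℕ) :
      (m.choose j : ZMod p) * (if ℓ = (m - j) % (p - 1) then 1 else 0) =
        if j = 0 then 1 else 0 := by
    have := congrArg (coeff · j) h1
    simpa only [coeff_sum_C_mul_X_add_C_pow, coeff_one, eq_comm (a := 0),
      Matrix.sum_mul_pow_of_mul_vandermonde_eq_one (ZMod.inv_vandermonde_mul_vandermonde p)
        ZMod.natCast_succ_pow_sub_one] using this
  have hmod : m % (p - 1) = ℓ := by
    by_contra h
    simpa [Ne.symm h] using hcoeff 0
  have hdvd (i : ℕ) (hi : i < m) (hiℓ : i ≡ ℓ [MOD p - 1]) : p ∣ m.choose i := by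
    have := hcoeff (m - i)
    rw [Nat.sub_sub_self hi.le, Nat.choose_symm hi.le,
      if_pos (by rw [hiℓ, Nat.mod_eq_of_lt hℓp]), if_neg (by omega), mul_one] at this
    exact (ZMod.natCast_eq_zero_iff _ _).1 this
  exact Nat.exists_fin_sum_pow_of_digits_sum_le hp.one_lt
    (Nat.digits_sum_le_of_dvd_choose hp hdvd) (hmod ▸ Nat.mod_modEq m (p - 1))
    (hmod ▸ Nat.mod_le m (p - 1))

open Polynomial in
theorem stmt11 (p : ℕ) (hp : p.Prime) (ℓ : ℕ) (hℓ : 1 ≤ ℓ) (hℓp : ℓ < p - 1)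
    (V : Matrix (Fin (p - 1)) (Fin (p - 1)) (ZMod p))
    (hV : ∀ a j : Fin (p - 1), V a j = (((a : ℕ) + 1 : ℕ) : ZMod p) ^ (j : ℕ))
    (A : Matrix (Fin (p - 1)) (Fin (p - 1)) (ZMod p)) (hA : A = V⁻¹)
    (m : ℕ) (hm : 0 < m)
    (h1 : ∑ a : Fin (p - 1),
        C (A ⟨ℓ, hℓp⟩ a) * (X + C (((a : ℕ) + 1 : ℕ) : ZMod p)) ^ m = 1)
    (h2 : ∀ k : Fin (p - 1), ℓ < (k : ℕ) →
        ∑ a : Fin (p - 1),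
          C (A k a) * (X + C (((a : ℕ) + 1 : ℕ) : ZMod p)) ^ m = 0) :
    ∃ n : Fin ℓ → ℕ, m = ∑ i, p ^ n i :=
  stmt11_general p hp ℓ hℓp V hV A hA m h1
end

section
/- Let P ∈ ℂ[x] be a polynomial of degree d ≥ 1, let Q(x) := P(x+β) where β is chosen so that Q has vanishing coefficient in degree d-1, let δ be the leading coefficient of Q, and let ξ ∈ ℂ[t] be a polynomial of degree a ≥ 1 with nonzero constant term. Then the polynomial δ·ξ(t)^d − c·t^{da} (for any nonzero constant c such that it is not identically zero) has degree at least (d-1)a, and if its degree equals (d-1)a then ξ(t) = γt^a + γ' for constants γ, γ'. -/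
/-!
Choose `e` with `δ e^d = c` and a primitive `d`-th root of unity `ω`. Then
`δ ξ^d - c t^{da} = δ ∏_{k<d} (ξ - ω^k e t^a)`. Each factor has degree at most `a`, and its
coefficient of `t^a` is `ξ_a - ω^k e`, which vanishes for at most one `k`. Hence all factors but
possibly one have degree exactly `a`, so the degree of the product is at least `(d-1)a`, with
equality only if the exceptional factor `ξ - ω^k e t^a` is a constant.
-/

open Polynomial Finset

theorem IsPrimitiveRoot.pow_sub_pow_eq_prod_range_sub_mul {R : Type*} [CommRing R] [IsDomain R]
    {ζ : R} {n : ℕ} (hζ : IsPrimitiveRoot ζ n) (hn : 0 < n) (x y : R) :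
    x ^ n - y ^ n = ∏ i ∈ range n, (x - ζ ^ i * y) := by
  simpa [eval_prod] using congrArg (eval x) (X_pow_sub_C_eq_prod hζ hn (α := y) rfl)

theorem Finset.exists_sum_eq_add_card_sub_one_mul {ι : Type*} [DecidableEq ι] {s : Finset ι}
    (hs : s.Nonempty) {n : ι → ℕ} {a : ℕ} (hle : ∀ i ∈ s, n i ≤ a)
    (hlt : ∀ i ∈ s, ∀ j ∈ s, n i < a → n j < a → i = j) :
    ∃ i ∈ s, ∑ j ∈ s, n j = n i + (#s - 1) * a := by
  obtain ⟨i, hi, hrest⟩ : ∃ i ∈ s, ∀ j ∈ s, j ≠ i → n j = a := by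
    by_cases hdef : ∃ i ∈ s, n i < a
    · obtain ⟨i, hi, hni⟩ := hdef
      exact ⟨i, hi, fun j hj hji => (hle j hj).eq_of_not_lt fun hnj => hji (hlt j hj i hi hnj hni)⟩
    · push Not at hdef
      obtain ⟨i, hi⟩ := hs
      exact ⟨i, hi, fun j hj _ => (hle j hj).antisymm (hdef j hj)⟩
  refine ⟨i, hi, ?_⟩
  rw [← add_sum_erase s n hi, sum_congr rfl fun j hj => hrest j (mem_of_mem_erase hj)
    (ne_of_mem_erase hj), sum_const, card_erase_of_mem hi, smul_eq_mul]

section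

variable {R : Type*} [CommRing R] {p : R[X]} {n : ℕ}

theorem Polynomial.natDegree_sub_C_mul_X_pow_le (hp : p.natDegree ≤ n) (r : R) :
    (p - C r * X ^ n).natDegree ≤ n :=
  (natDegree_sub_le_of_le hp (natDegree_C_mul_X_pow_le r n)).trans_eq (max_self n)

theorem Polynomial.coeff_eq_of_natDegree_sub_C_mul_X_pow_lt {r : R}
    (h : (p - C r * X ^ n).natDegree < n) : p.coeff n = r := by
  simpa [coeff_C_mul_X_pow, sub_eq_zero] using coeff_eq_zero_of_natDegree_lt h

theorem Polynomial.pow_sub_C_mul_X_pow_eq_prod [IsDomain R] {ω : R} {d : ℕ}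
    (hω : IsPrimitiveRoot ω d) (hd : 0 < d) (ξ : R[X]) (e : R) (a : ℕ) :
    ξ ^ d - C (e ^ d) * X ^ (d * a) = ∏ k ∈ range d, (ξ - C (ω ^ k * e) * X ^ a) := by
  have hprod := (hω.map_of_injective C_injective).pow_sub_pow_eq_prod_range_sub_mul hd ξ
    (C e * X ^ a)
  simp only [← C_pow, ← mul_assoc, ← C_mul] at hprod
  rw [← hprod, mul_pow, ← pow_mul, mul_comm a d, map_pow]

theorem Polynomial.exists_natDegree_pow_sub_C_mul_X_pow_eq [IsDomain R] {ω : R} {d : ℕ}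
    (hω : IsPrimitiveRoot ω d) (hd : 0 < d) {ξ : R[X]} {a : ℕ} (hξ : ξ.natDegree ≤ a) {e : R}
    (he : e ≠ 0) (hne : ξ ^ d - C (e ^ d) * X ^ (d * a) ≠ 0) :
    ∃ r, (ξ ^ d - C (e ^ d) * X ^ (d * a)).natDegree =
      (ξ - C r * X ^ a).natDegree + (d - 1) * a := by
  rw [pow_sub_C_mul_X_pow_eq_prod hω hd] at hne ⊢
  have hlt : ∀ k ∈ range d, ∀ l ∈ range d, (ξ - C (ω ^ k * e) * X ^ a).natDegree < a →
      (ξ - C (ω ^ l * e) * X ^ a).natDegree < a → k = l := by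
    intro k hk l hl hka hla
    have hωkl : ω ^ k * e = ω ^ l * e :=
      (coeff_eq_of_natDegree_sub_C_mul_X_pow_lt hka).symm.trans
        (coeff_eq_of_natDegree_sub_C_mul_X_pow_lt hla)
    exact hω.pow_inj (mem_range.mp hk) (mem_range.mp hl) (mul_right_cancel₀ he hωkl)
  obtain ⟨k, -, hsum⟩ := exists_sum_eq_add_card_sub_one_mul (nonempty_range_iff.mpr hd.ne')
    (fun k _ => natDegree_sub_C_mul_X_pow_le hξ _) hlt
  exact ⟨ω ^ k * e, by rw [natDegree_prod _ _ (prod_ne_zero_iff.mp hne), hsum, card_range]⟩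

end

open Polynomial in
theorem stmt14_general (P : Polynomial ℂ) (d : ℕ) (hd : 1 ≤ d) (hP : P.natDegree = d)
    (β : ℂ) (Q : Polynomial ℂ) (hQ : Q = P.comp (X + C β))
    (δ : ℂ) (hδ : δ = Q.leadingCoeff)
    (ξ : Polynomial ℂ) (a : ℕ) (hξ : ξ.natDegree = a)
    (c : ℂ) (hc : c ≠ 0)
    (hne : C δ * ξ ^ d - C c * X ^ (d * a) ≠ 0) :
    (d - 1) * a ≤ (C δ * ξ ^ d - C c * X ^ (d * a)).natDegree ∧
    ((C δ * ξ ^ d - C c * X ^ (d * a)).natDegree = (d - 1) * a →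
      ∃ γ γ' : ℂ, ξ = C γ * X ^ a + C γ') := by
  have hδ0 : δ ≠ 0 := by
    rw [hδ, hQ, leadingCoeff_comp (by simp), leadingCoeff_X_add_C, one_pow, mul_one]
    exact leadingCoeff_ne_zero.mpr (ne_zero_of_natDegree_gt (n := 0) (by omega))
  obtain ⟨e, he⟩ := IsAlgClosed.exists_pow_nat_eq (c / δ) hd
  have he0 : e ≠ 0 := by
    rintro rfl
    rw [zero_pow (by omega), eq_comm, div_eq_zero_iff] at he
    tauto
  have hF : C δ * ξ ^ d - C c * X ^ (d * a) = C δ * (ξ ^ d - C (e ^ d) * X ^ (d * a)) := by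
    rw [he, mul_sub, ← mul_assoc, ← C_mul, mul_div_cancel₀ c hδ0]
  rw [hF] at hne ⊢
  rw [natDegree_C_mul hδ0]
  obtain ⟨r, hr⟩ := exists_natDegree_pow_sub_C_mul_X_pow_eq (Complex.isPrimitiveRoot_exp d
    (by omega)) hd hξ.le he0 (right_ne_zero_of_mul hne)
  rw [hr]
  refine ⟨by omega, fun h => ⟨r, _, sub_eq_iff_eq_add'.mp
    (eq_C_of_natDegree_eq_zero (p := ξ - C r * X ^ a) (by omega))⟩⟩

open Polynomial in
theorem stmt14 (P : Polynomial ℂ) (d : ℕ) (hd : 1 ≤ d) (hP : P.natDegree = d)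
    (β : ℂ) (Q : Polynomial ℂ) (hQ : Q = P.comp (X + C β))
    (hQcoeff : Q.coeff (d - 1) = 0)
    (δ : ℂ) (hδ : δ = Q.leadingCoeff)
    (ξ : Polynomial ℂ) (a : ℕ) (ha : 1 ≤ a) (hξ : ξ.natDegree = a)
    (hξ0 : ξ.coeff 0 ≠ 0)
    (c : ℂ) (hc : c ≠ 0)
    (hne : C δ * ξ ^ d - C c * X ^ (d * a) ≠ 0) :
    (d - 1) * a ≤ (C δ * ξ ^ d - C c * X ^ (d * a)).natDegree ∧
    ((C δ * ξ ^ d - C c * X ^ (d * a)).natDegree = (d - 1) * a →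
      ∃ γ γ' : ℂ, ξ = C γ * X ^ a + C γ') :=
  stmt14_general P d hd hP β Q hQ δ hδ ξ a hξ c hc hne
end

section
/- Let X be a commutative group, Φ: X → X a map of the form Φ(γ) = Φ₀(γ) + y where Φ₀ is a group endomorphism satisfying a monic integral equation Φ₀^ℓ + c_{ℓ-1}Φ₀^{ℓ-1} + ... + c_0·Id = 0 in End(X), and y, α ∈ X. Then there exist integer linear recurrence sequences {u_n^{(i)}}_{1≤i≤ℓ} and {v_n^{(i)}}_{0≤i≤ℓ-1}, whose characteristic roots are among the roots of x^ℓ + c_{ℓ-1}x^{ℓ-1} + ... + c_0 (together with 1 for the u^{(i)}), such that for all n ∈ ℕ₀: Φ^n(α) = ∑_{i=1}^ℓ u_n^{(i)} (∑_{j=0}^{i-1} Φ₀^j(y)) + ∑_{i=0}^{ℓ-1} v_n^{(i)} Φ₀^i(α). -/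
/-!
Since Φ = Φ₀ + y, we have Φⁿ(α) = Φ₀ⁿ(α) + ∑_{k<n} Φ₀ᵏ(y). The monic relation makes every
orbit n ↦ Φ₀ⁿ(x) a solution, with values in X, of the integer recurrence with characteristic
polynomial x^ℓ + c_{ℓ-1}x^{ℓ-1} + ⋯ + c₀; any such solution is ∑_{i<ℓ} vᵢ(n) Φ₀ⁱ(x), where vᵢ
is the integer solution whose initial values form the i-th unit vector. Summing over k < n and
summing by parts against the partial sums ∑_{j≤i} Φ₀ʲ(y) gives the coefficients
uᵢ(n) = ∑_{k<n} (vᵢ(k) - vᵢ₊₁(k)), with v_ℓ = 0; their differences vᵢ - vᵢ₊₁ again solve the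
recurrence.
-/

open Finset

theorem Finset.sum_range_smul_eq_sum_sub_smul_partialSum {R M : Type*} [Ring R] [AddCommGroup M]
    [Module R M] (a : ℕ → R) (z : ℕ → M) (m : ℕ) :
    ∑ i ∈ range m, a i • z i =
      ∑ i ∈ range m, (a i - a (i + 1)) • ∑ j ∈ range (i + 1), z j
        + a m • ∑ j ∈ range m, z j := by
  induction m with
  | zero => simp
  | succ m ih =>
    rw [sum_range_succ, ih, sum_range_succ _ m, sum_range_succ z m, sub_smul, smul_add]
    abel

namespace LinearRecurrence

variable {R : Type*} [CommRing R] (E : LinearRecurrence R)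

def unitSol (i : ℕ) : ℕ → R :=
  E.mkSol fun j => if (j : ℕ) = i then 1 else 0

theorem isSolution_unitSol (i : ℕ) : E.IsSolution (E.unitSol i) :=
  E.is_sol_mkSol _

theorem unitSol_of_lt {i n : ℕ} (hn : n < E.order) :
    E.unitSol i n = if n = i then 1 else 0 :=
  E.mkSol_eq_init _ ⟨n, hn⟩

theorem unitSol_of_order_le {i : ℕ} (hi : E.order ≤ i) : E.unitSol i = 0 :=
  (E.eq_mk_of_is_sol_of_eq_init' (u := 0) (fun n => by simp)
    (fun j => by simp only [Pi.zero_apply]; rw [if_neg (by omega)])).symm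

variable {M : Type*} [AddCommGroup M] [Module R M]

theorem eq_sum_unitSol_smul {f : ℕ → M}
    (hf : ∀ n, f (n + E.order) = ∑ j, E.coeffs j • f (n + j)) (n : ℕ) :
    f n = ∑ i ∈ range E.order, E.unitSol i n • f i := by
  induction n using Nat.strong_induction_on with
  | _ n ih =>
    rcases lt_or_ge n E.order with hn | hn
    · simp [E.unitSol_of_lt hn, hn]
    obtain ⟨m, rfl⟩ := Nat.exists_eq_add_of_le' hn
    calc f (m + E.order)
        = ∑ j, E.coeffs j • ∑ i ∈ range E.order, E.unitSol i (m + j) • f i := by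
          rw [hf]
          exact sum_congr rfl fun j _ => by rw [← ih _ (by omega)]
      _ = ∑ i ∈ range E.order, (∑ j, E.coeffs j * E.unitSol i (m + j)) • f i := by
          simp only [smul_sum, sum_smul, mul_smul]
          exact sum_comm
      _ = _ := by simp only [← E.isSolution_unitSol _ m]

theorem sum_range_eq_sum_smul_partialSum {f : ℕ → M}
    (hf : ∀ n, f (n + E.order) = ∑ j, E.coeffs j • f (n + j)) (n : ℕ) :
    ∑ k ∈ range n, f k =
      ∑ i ∈ range E.order, (∑ k ∈ range n, (E.unitSol i k - E.unitSol (i + 1) k)) •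
        ∑ j ∈ range (i + 1), f j := by
  calc ∑ k ∈ range n, f k
      = ∑ i ∈ range E.order, (∑ k ∈ range n, E.unitSol i k) • f i := by
        simp only [sum_smul]
        rw [sum_comm]
        exact sum_congr rfl fun k _ => E.eq_sum_unitSol_smul hf k
    _ = _ := by
        rw [sum_range_smul_eq_sum_sub_smul_partialSum, E.unitSol_of_order_le le_rfl]
        simp [sum_sub_distrib]

/-- The recurrence with characteristic polynomial `X ^ ℓ + ∑ j, c j * X ^ j`. -/
def ofMonicCoeffs {ℓ : ℕ} (c : Fin ℓ → R) : LinearRecurrence R := ⟨ℓ, -c⟩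

theorem isSolution_ofMonicCoeffs_iff {ℓ : ℕ} (c : Fin ℓ → R) (u : ℕ → R) :
    (ofMonicCoeffs c).IsSolution u ↔ ∀ n, u (n + ℓ) + ∑ j, c j * u (n + j) = 0 := by
  simp only [IsSolution, ofMonicCoeffs, Pi.neg_apply, neg_mul, sum_neg_distrib,
    add_eq_zero_iff_eq_neg]
  exact Iff.rfl

end LinearRecurrence

namespace AddMonoid.End

variable {X : Type*} [AddCommGroup X]

theorem iterate_add_const_apply (f : AddMonoid.End X) (y x : X) (n : ℕ) :
    (fun γ => f γ + y)^[n] x = (f ^ n) x + ∑ k ∈ range n, (f ^ k) y := by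
  induction n with
  | zero => simp
  | succ n ih =>
    simp only [Function.iterate_succ_apply', ih, map_add, map_sum, sum_range_succ',
      AddMonoid.End.coe_pow, Function.iterate_zero_apply, add_assoc]

theorem pow_add_apply_eq_sum_ofMonicCoeffs {ℓ : ℕ} {c : Fin ℓ → ℤ} {f : AddMonoid.End X}
    (hf : f ^ ℓ + ∑ i : Fin ℓ, c i • f ^ (i : ℕ) = 0) (x : X) (n : ℕ) :
    (f ^ (n + ℓ)) x =
      ∑ j, (LinearRecurrence.ofMonicCoeffs c).coeffs j • (f ^ (n + (j : ℕ))) x := by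
  have hpow : f ^ (n + ℓ) = ∑ j : Fin ℓ, (-c j) • f ^ (n + (j : ℕ)) := by
    simp only [pow_add, eq_neg_of_add_eq_zero_left hf, mul_neg, mul_sum, mul_smul_comm, neg_smul,
      sum_neg_distrib]
  rw [hpow]
  exact (AddMonoidHom.finsetSum_apply _ _ _).trans
    (sum_congr rfl fun j _ => AddMonoid.End.smul_apply _ _ _)

end AddMonoid.End

theorem stmt17_general (X : Type*) [AddCommGroup X]
    (Φ₀ : AddMonoid.End X) (ℓ : ℕ) (c : Fin ℓ → ℤ)
    (hmin : Φ₀ ^ ℓ + ∑ i : Fin ℓ, c i • Φ₀ ^ (i : ℕ) = 0)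
    (y α : X) (Φ : X → X) (hΦ : ∀ γ : X, Φ γ = Φ₀ γ + y) :
    ∃ u v : Fin ℓ → ℕ → ℤ,
      -- each v⁽ⁱ⁾ satisfies the recurrence with characteristic polynomial
      -- x^ℓ + c_{ℓ-1} x^{ℓ-1} + ⋯ + c₀
      (∀ (i : Fin ℓ) (n : ℕ),
        v i (n + ℓ) + ∑ j : Fin ℓ, c j * v i (n + j) = 0) ∧
      -- each u⁽ⁱ⁾ satisfies the recurrence with characteristic polynomial
      -- (x - 1)·(x^ℓ + c_{ℓ-1} x^{ℓ-1} + ⋯ + c₀), i.e. its difference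
      -- sequence satisfies the recurrence of Φ₀ (roots among those of the
      -- minimal equation together with 1)
      (∀ (i : Fin ℓ) (n : ℕ),
        (u i (n + 1 + ℓ) - u i (n + ℓ)) +
          ∑ j : Fin ℓ, c j * (u i (n + 1 + j) - u i (n + j)) = 0) ∧
      (∀ n : ℕ,
        Φ^[n] α =
          ∑ i : Fin ℓ, u i n • (∑ j ∈ Finset.range ((i : ℕ) + 1), (Φ₀ ^ j) y)
            + ∑ i : Fin ℓ, v i n • (Φ₀ ^ (i : ℕ)) α) := by
  set E := LinearRecurrence.ofMonicCoeffs c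
  have hsol := LinearRecurrence.isSolution_ofMonicCoeffs_iff c
  have horbit := Φ₀.pow_add_apply_eq_sum_ofMonicCoeffs hmin
  refine ⟨fun i n => ∑ k ∈ range n, (E.unitSol i k - E.unitSol (i + 1) k),
    fun i => E.unitSol i, fun i => (hsol _).1 (E.isSolution_unitSol i), fun i n => ?_, fun n => ?_⟩
  · have hdiff : E.IsSolution (E.unitSol i - E.unitSol (i + 1)) :=
      E.solSpace.sub_mem (E.isSolution_unitSol _) (E.isSolution_unitSol _)
    simpa only [add_right_comm n 1, sum_range_succ_sub_sum, Pi.sub_apply]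
      using (hsol _).1 hdiff n
  · rw [show Φ = fun γ => Φ₀ γ + y from funext hΦ, AddMonoid.End.iterate_add_const_apply,
      E.eq_sum_unitSol_smul (f := fun k => (Φ₀ ^ k) α) (horbit α),
      E.sum_range_eq_sum_smul_partialSum (f := fun k => (Φ₀ ^ k) y) (horbit y), add_comm]
    simp only [← Fin.sum_univ_eq_sum_range]
    rfl

theorem stmt17 (X : Type*) [AddCommGroup X]
    (Φ₀ : AddMonoid.End X) (ℓ : ℕ) (hℓ : 1 ≤ ℓ) (c : Fin ℓ → ℤ)
    (hmin : Φ₀ ^ ℓ + ∑ i : Fin ℓ, c i • Φ₀ ^ (i : ℕ) = 0)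
    (y α : X) (Φ : X → X) (hΦ : ∀ γ : X, Φ γ = Φ₀ γ + y) :
    ∃ u v : Fin ℓ → ℕ → ℤ,
      -- each v⁽ⁱ⁾ satisfies the recurrence with characteristic polynomial
      -- x^ℓ + c_{ℓ-1} x^{ℓ-1} + ⋯ + c₀
      (∀ (i : Fin ℓ) (n : ℕ),
        v i (n + ℓ) + ∑ j : Fin ℓ, c j * v i (n + j) = 0) ∧
      -- each u⁽ⁱ⁾ satisfies the recurrence with characteristic polynomial
      -- (x - 1)·(x^ℓ + c_{ℓ-1} x^{ℓ-1} + ⋯ + c₀), i.e. its difference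
      -- sequence satisfies the recurrence of Φ₀ (roots among those of the
      -- minimal equation together with 1)
      (∀ (i : Fin ℓ) (n : ℕ),
        (u i (n + 1 + ℓ) - u i (n + ℓ)) +
          ∑ j : Fin ℓ, c j * (u i (n + 1 + j) - u i (n + j)) = 0) ∧
      (∀ n : ℕ,
        Φ^[n] α =
          ∑ i : Fin ℓ, u i n • (∑ j ∈ Finset.range ((i : ℕ) + 1), (Φ₀ ^ j) y)
            + ∑ i : Fin ℓ, v i n • (Φ₀ ^ (i : ℕ)) α) :=
  stmt17_general X Φ₀ ℓ c hmin y α Φ hΦ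
end
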